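/- For all indices 1 ≤ i, j ≤ N, the integral of the edge polynomial h_i over the j-th sub-interval satisfies ∫_{ξ_{j-1}}^{ξ_j} h_i(ξ) dξ = δ_{ij}, where δ_{ij} is the Kronecker delta. -/

import Mathlib

/-!
Each edge polynomial is a derivative, `h_i = (-∑_{k<i} l_k)'`, so by the fundamental theorem of
calculus its integral over `[ξ_{j-1}, ξ_j]` is a difference of values of `-∑_{k<i} l_k` at two
consecutive nodes. By the Lagrange property that partial sum is `1` at the nodes `ξ_m` with
`m < i` and `0` at the others, so the integral is `[j - 1 < i] - [j < i] = δ_{ij}`.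
-/

open Polynomial

theorem Polynomial.intervalIntegral_eval_derivative (p : ℝ[X]) (a b : ℝ) :
    ∫ t in a..b, (derivative p).eval t = p.eval b - p.eval a :=
  intervalIntegral.integral_eq_sub_of_hasDerivAt (fun x _ => p.hasDerivAt x)
    ((Polynomial.continuous _).intervalIntegrable _ _)

theorem Polynomial.eval_sum_ite_of_eval_eq_ite {ι R : Type*} [Fintype ι] [DecidableEq ι]
    [CommRing R] (l : ι → R[X]) (x : ι → R) (hl : ∀ i j, (l i).eval (x j) = if i = j then 1 else 0)
    (P : ι → Prop) [DecidablePred P] (a : ι) :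
    (∑ k, if P k then l k else 0).eval (x a) = if P a then 1 else 0 := by
  simp only [eval_finsetSum, apply_ite (eval (x a)), hl, eval_zero]
  rw [Fintype.sum_eq_single a fun k hk => by simp [hk]]
  simp

theorem edge_polynomial_subinterval_integral
    (N : ℕ) (ξ : Fin (N + 1) → ℝ)
    (l : Fin (N + 1) → Polynomial ℝ)
    (hlag : ∀ i j, (l i).eval (ξ j) = if i = j then 1 else 0)
    (h : Fin N → Polynomial ℝ)
    (hdef : ∀ i : Fin N,
      h i = -∑ j : Fin (N + 1), if (j : ℕ) < (i : ℕ) + 1 then derivative (l j) else 0) :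
    ∀ i j : Fin N,
      (∫ t in (ξ j.castSucc)..(ξ j.succ), (h i).eval t) = if i = j then 1 else 0 := by
  intro i j
  have h_eq_derivative :
      h i = derivative (-∑ k : Fin (N + 1), if (k : ℕ) < (i : ℕ) + 1 then l k else 0) := by
    simp only [hdef, derivative_neg, derivative_sum, apply_ite derivative, derivative_zero]
  rw [h_eq_derivative, intervalIntegral_eval_derivative, eval_neg, eval_neg,
    eval_sum_ite_of_eval_eq_ite l ξ hlag, eval_sum_ite_of_eval_eq_ite l ξ hlag]
  simp only [Fin.val_succ, Fin.val_castSucc, Fin.ext_iff]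
  split_ifs <;> first | omega | norm_num
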